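/- arXiv:1301.6911 — 7 statements merged into one kernel-verified Lean document; each statement's English description precedes it below -/
import Mathlib

section
/- Let ρ be a probability measure on ℝ. Then inf_{(u,v) ∈ ℝ²} ln ∫_ℝ e^{uz + vz²} dρ(z) = ln ρ({0}), and consequently the Cramér transform I of the law of (Z, Z²) for Z ~ ρ satisfies I(0,0) = −ln ρ({0}) (with the convention ln 0 = −∞). -/
/-! Every `lapCW ρ u v` dominates the contribution `ρ {0}` of the atom at `0`. Conversely, along
`u = 0, v = -n` the integrands are bounded by `1` and decrease pointwise to the indicator of `{0}`,
so by dominated convergence `lapCW ρ 0 (-n) → ρ {0}`. Since `log` is an order isomorphism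
`ℝ≥0∞ ≃o EReal` it commutes with the infimum, and `I(0,0) = ⨆ -log Λ = -⨅ log Λ`. -/

open MeasureTheory ENNReal

/-- The log-Laplace transform of the law of `(Z, Z^2)` for `Z ~ ρ`, as a function into `ℝ≥0∞`
before taking logarithms. -/
noncomputable def lapCW (ρ : Measure ℝ) (u v : ℝ) : ℝ≥0∞ :=
  ∫⁻ z, ENNReal.ofReal (Real.exp (u * z + v * z ^ 2)) ∂ρ

/-- The Cramér transform `I` of the law of `(Z, Z^2)` for `Z ~ ρ`, with values in `EReal`. -/
noncomputable def cramCW (ρ : Measure ℝ) (x y : ℝ) : EReal :=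
  ⨆ p : ℝ × ℝ, (((x * p.1 + y * p.2 : ℝ) : EReal) - ENNReal.log (lapCW ρ p.1 p.2))

open Filter Topology

theorem EReal.neg_iInf {ι : Sort*} (f : ι → EReal) : -⨅ i, f i = ⨆ i, -f i :=
  EReal.negOrderIso.map_iInf f

theorem measure_singleton_zero_le_lapCW (ρ : Measure ℝ) (u v : ℝ) : ρ {0} ≤ lapCW ρ u v :=
  calc ρ {0} = ∫⁻ z in {0}, ENNReal.ofReal (Real.exp (u * z + v * z ^ 2)) ∂ρ := by simp
    _ ≤ lapCW ρ u v := setLIntegral_le_lintegral _ _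

theorem tendsto_ofReal_exp_neg_natCast_mul_sq (z : ℝ) :
    Tendsto (fun n : ℕ => ENNReal.ofReal (Real.exp (-n * z ^ 2))) atTop
      (𝓝 (({0} : Set ℝ).indicator 1 z)) := by
  rcases eq_or_ne z 0 with rfl | hz
  · simp
  · have h : Tendsto (fun n : ℕ => -n * z ^ 2) atTop atBot :=
      (tendsto_neg_atBot_iff.mpr tendsto_natCast_atTop_atTop).atBot_mul_const (by positivity)
    simpa [hz, Function.comp_def] using
      (ENNReal.continuous_ofReal.tendsto 0).comp (Real.tendsto_exp_atBot.comp h)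

theorem tendsto_lapCW_zero_neg_natCast (ρ : Measure ℝ) [IsFiniteMeasure ρ] :
    Tendsto (fun n : ℕ => lapCW ρ 0 (-n)) atTop (𝓝 (ρ {0})) := by
  have hlim := tendsto_lintegral_of_dominated_convergence (μ := ρ) 1
    (fun n => (by fun_prop : Measurable fun z : ℝ => ENNReal.ofReal (Real.exp (-n * z ^ 2))))
    (fun n => ae_of_all _ fun z => ?_) (by simp) (ae_of_all _ tendsto_ofReal_exp_neg_natCast_mul_sq)
  · rw [lintegral_indicator (measurableSet_singleton 0)] at hlim
    simpa [lapCW] using hlim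
  · refine ENNReal.ofReal_le_one.mpr (Real.exp_le_one_iff.mpr ?_)
    exact mul_nonpos_of_nonpos_of_nonneg (neg_nonpos.mpr n.cast_nonneg) (sq_nonneg z)

theorem iInf_lapCW (ρ : Measure ℝ) [IsFiniteMeasure ρ] :
    ⨅ p : ℝ × ℝ, lapCW ρ p.1 p.2 = ρ {0} :=
  le_antisymm
    (ge_of_tendsto' (tendsto_lapCW_zero_neg_natCast ρ) fun n =>
      iInf_le (fun p : ℝ × ℝ => lapCW ρ p.1 p.2) (0, -n))
    (le_iInf fun p => measure_singleton_zero_le_lapCW ρ p.1 p.2)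

theorem iInf_logLaplace_eq_log_mass_at_zero (ρ : Measure ℝ) [IsProbabilityMeasure ρ] :
    (⨅ p : ℝ × ℝ, ENNReal.log (lapCW ρ p.1 p.2)) = ENNReal.log (ρ {0}) ∧
    cramCW ρ 0 0 = -ENNReal.log (ρ {0}) := by
  have hlog : ⨅ p : ℝ × ℝ, ENNReal.log (lapCW ρ p.1 p.2) = ENNReal.log (ρ {0}) := by
    rw [← iInf_lapCW ρ]
    exact (ENNReal.logOrderIso.map_iInf _).symm
  refine ⟨hlog, ?_⟩
  simp only [cramCW, zero_mul, add_zero, EReal.coe_zero, zero_sub]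
  rw [← hlog, EReal.neg_iInf]
end

section
/- Let c > 0 and define φ_c(x) = sup_{u ∈ ℝ} (ux − ln cosh(uc)). Then the function x ↦ φ_c(x) − x²/(2c²) is nonnegative on [−c, c], increasing on [0, c], decreasing on [−c, 0], and equals 0 at x = 0. -/
/-!
Substituting `u ↦ u / c` in the supremum reduces everything to `c = 1`. Gibbs' inequality
`p a + (1 - p) b + H(p) ≤ log (eᵃ + eᵇ)`, with equality when `eᵃ : eᵇ = p : (1 - p)`,
identifies `φ₁(y) = sup_u (u y - log cosh u)` with `log 2 - H((1 + y) / 2)` on `[-1, 1]`;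
at `y = ±1` the supremum is only reached as `u → ±∞`. The derivative
`(log (1 + y) - log (1 - y)) / 2 = y + y³/3 + ⋯` of this function exceeds `y` on `(0, 1)`,
so `φ₁(y) - y² / 2` is strictly increasing on `[0, 1]`; it is even and vanishes at `0`.
-/

open Real

/-- The Cramér transform of the symmetric Bernoulli distribution `(δ_{-c} + δ_c)/2`. -/
noncomputable def phiC (c : ℝ) (x : ℝ) : ℝ :=
  ⨆ u : ℝ, (u * x - Real.log (Real.cosh (u * c)))

open Set Filter Topology

lemma phiC_eq_phiC_one_div {c : ℝ} (hc : c ≠ 0) (x : ℝ) : phiC c x = phiC 1 (x / c) := by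
  simp only [phiC]
  rw [← (mul_right_surjective₀ hc).iSup_comp fun v => v * (x / c) - log (cosh (v * 1))]
  congr 1 with u
  rw [mul_one, mul_assoc, mul_div_cancel₀ x hc]

lemma mul_log_sub_mul_log_le {p q : ℝ} (hp : 0 ≤ p) (hq : 0 < q) :
    p * log q - p * log p ≤ q - p := by
  rcases hp.eq_or_lt with rfl | hp
  · simpa using hq.le
  have h := log_le_sub_one_of_pos (div_pos hq hp)
  rw [log_div hq.ne' hp.ne'] at h
  calc p * log q - p * log p = p * (log q - log p) := by ring
    _ ≤ p * (q / p - 1) := mul_le_mul_of_nonneg_left h hp.le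
    _ = q - p := by field_simp

lemma mul_add_mul_add_binEntropy_le {p : ℝ} (hp₀ : 0 ≤ p) (hp₁ : p ≤ 1) (a b : ℝ) :
    p * a + (1 - p) * b + binEntropy p ≤ log (exp a + exp b) := by
  set S := exp a + exp b
  have hS : 0 < S := by positivity
  have hsum : exp a / S + exp b / S = 1 := by rw [← add_div, div_self hS.ne']
  have ha := mul_log_sub_mul_log_le hp₀ (div_pos (exp_pos a) hS)
  have hb := mul_log_sub_mul_log_le (sub_nonneg.2 hp₁) (div_pos (exp_pos b) hS)
  rw [log_div (exp_pos a).ne' hS.ne', log_exp] at ha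
  rw [log_div (exp_pos b).ne' hS.ne', log_exp] at hb
  rw [binEntropy, log_inv, log_inv]
  linarith

lemma mul_add_mul_add_binEntropy_eq {p a b : ℝ} (hp₀ : 0 < p) (hp₁ : p < 1)
    (hab : a - b = log p - log (1 - p)) :
    p * a + (1 - p) * b + binEntropy p = log (exp a + exp b) := by
  set m := a - log p
  have ha : exp a = p * exp m := by
    rw [show a = log p + m by ring, exp_add, exp_log hp₀]
  have hb : exp b = (1 - p) * exp m := by
    rw [show b = log (1 - p) + m by linarith, exp_add, exp_log (sub_pos.2 hp₁)]
  rw [ha, hb, ← add_mul, add_sub_cancel, one_mul, log_exp, binEntropy, log_inv, log_inv]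
  linear_combination (p - 1) * hab

lemma log_cosh_eq_log_exp_add_exp (u : ℝ) : log (cosh u) = log (exp u + exp (-u)) - log 2 := by
  rw [cosh_eq, log_div (by positivity) two_ne_zero]

/-- The explicit formula `((1 + y) log (1 + y) + (1 - y) log (1 - y)) / 2` for `φ₁(y)`. -/
noncomputable def bernoulliRate (y : ℝ) : ℝ := log 2 - binEntropy ((1 + y) / 2)

lemma mul_sub_log_cosh_le_bernoulliRate {y : ℝ} (hy : y ∈ Icc (-1) 1) (u : ℝ) :
    u * y - log (cosh u) ≤ bernoulliRate y := by
  have := mul_add_mul_add_binEntropy_le (p := (1 + y) / 2) (by linarith [hy.1])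
    (by linarith [hy.2]) u (-u)
  rw [log_cosh_eq_log_exp_add_exp, bernoulliRate]
  linarith

lemma exists_mul_sub_log_cosh_eq_log_exp_add_exp_bernoulliRate {y : ℝ} (hy : y ∈ Ioo (-1) 1) :
    ∃ u, u * y - log (cosh u) = bernoulliRate y := by
  set u := (log ((1 + y) / 2) - log (1 - (1 + y) / 2)) / 2
  have := mul_add_mul_add_binEntropy_eq (p := (1 + y) / 2) (a := u) (b := -u)
    (by linarith [hy.1]) (by linarith [hy.2]) (by ring)
  refine ⟨u, ?_⟩
  rw [log_cosh_eq_log_exp_add_exp, bernoulliRate]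
  linarith

lemma tendsto_sub_log_cosh_atTop : Tendsto (fun t => t - log (cosh t)) atTop (𝓝 (log 2)) := by
  have h (t : ℝ) : t - log (cosh t) = log 2 - log (1 + exp (-(2 * t))) := by
    have : exp t + exp (-t) = exp t * (1 + exp (-(2 * t))) := by
      rw [mul_add, mul_one, ← exp_add]; ring_nf
    rw [log_cosh_eq_log_exp_add_exp, this, log_mul (exp_pos t).ne' (by positivity), log_exp]
    ring
  simp_rw [h]
  have hexp : Tendsto (fun t : ℝ => exp (-(2 * t))) atTop (𝓝 0) :=
    tendsto_exp_neg_atTop_nhds_zero.comp (tendsto_id.const_mul_atTop two_pos)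
  simpa using tendsto_const_nhds.sub
    ((tendsto_const_nhds.add hexp).log (by norm_num : (1 : ℝ) + 0 ≠ 0))

lemma phiC_one_eq_bernoulliRate {y : ℝ} (hy : y ∈ Icc (-1) 1) :
    phiC 1 y = bernoulliRate y := by
  simp only [phiC, mul_one]
  have hbdd : BddAbove (range fun u => u * y - log (cosh u)) :=
    ⟨_, forall_mem_range.2 (mul_sub_log_cosh_le_bernoulliRate hy)⟩
  refine le_antisymm (ciSup_le (mul_sub_log_cosh_le_bernoulliRate hy)) ?_
  rcases hy.1.eq_or_lt with rfl | hy₀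
  · simpa [bernoulliRate] using le_of_tendsto' tendsto_sub_log_cosh_atTop
      fun t => by simpa using le_ciSup hbdd (-t)
  rcases hy.2.eq_or_lt with rfl | hy₁
  · norm_num [bernoulliRate]
    exact le_of_tendsto' tendsto_sub_log_cosh_atTop fun t => by simpa using le_ciSup hbdd t
  obtain ⟨u, hu⟩ := exists_mul_sub_log_cosh_eq_log_exp_add_exp_bernoulliRate ⟨hy₀, hy₁⟩
  exact hu ▸ le_ciSup hbdd u

lemma two_mul_lt_log_sub_log {y : ℝ} (hy : y ∈ Ioo 0 1) :
    2 * y < log (1 + y) - log (1 - y) := by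
  have hs := hasSum_log_sub_log_of_abs_lt_one (abs_lt.2 ⟨by linarith [hy.1], hy.2⟩)
  have h := sum_le_hasSum (Finset.range 2) (fun k _ => by have := hy.1; positivity) hs
  norm_num [Finset.sum_range_succ] at h
  nlinarith [pow_pos hy.1 3]

lemma hasDerivAt_bernoulliRate {y : ℝ} (hy : y ∈ Ioo (-1) 1) :
    HasDerivAt bernoulliRate ((log (1 + y) - log (1 - y)) / 2) y := by
  refine (((hasDerivAt_binEntropy (p := (1 + y) / 2) (by linarith [hy.1])
    (by linarith [hy.2])).comp y (((hasDerivAt_id y).const_add 1).div_const 2)).const_sub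
    (log 2)).congr_deriv ?_
  rw [show 1 - (1 + y) / 2 = (1 - y) / 2 by ring, log_div, log_div]
  · ring
  all_goals linarith [hy.1, hy.2]

lemma strictMonoOn_bernoulliRate_sub_sq :
    StrictMonoOn (fun y => bernoulliRate y - y ^ 2 / 2) (Icc 0 1) := by
  refine strictMonoOn_of_deriv_pos (convex_Icc 0 1) (by unfold bernoulliRate; fun_prop)
    fun y hy => ?_
  rw [interior_Icc] at hy
  have hd := (hasDerivAt_bernoulliRate ⟨by linarith [hy.1], hy.2⟩).fun_sub
    ((hasDerivAt_pow 2 y).div_const 2)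
  rw [hd.deriv]
  have := two_mul_lt_log_sub_log hy
  norm_num
  linarith

lemma bernoulliRate_neg (y : ℝ) : bernoulliRate (-y) = bernoulliRate y := by
  rw [bernoulliRate, bernoulliRate, ← binEntropy_one_sub]
  ring_nf

lemma bernoulliRate_zero : bernoulliRate 0 = 0 := by
  rw [bernoulliRate, add_zero, one_div, binEntropy_two_inv, sub_self]

lemma strictAntiOn_bernoulliRate_sub_sq :
    StrictAntiOn (fun y => bernoulliRate y - y ^ 2 / 2) (Icc (-1) 0) := by
  intro x hx y hy hxy
  have := strictMonoOn_bernoulliRate_sub_sq (a := -y) (b := -x)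
    ⟨by linarith [hy.2], by linarith [hy.1]⟩ ⟨by linarith [hx.2], by linarith [hx.1]⟩
    (neg_lt_neg hxy)
  simpa [bernoulliRate_neg] using this

lemma bernoulliRate_sub_sq_nonneg {y : ℝ} (hy : y ∈ Icc (-1) 1) :
    0 ≤ bernoulliRate y - y ^ 2 / 2 := by
  rcases le_total 0 y with h | h
  · simpa [bernoulliRate_zero] using
      strictMonoOn_bernoulliRate_sub_sq.monotoneOn ⟨le_rfl, zero_le_one⟩ ⟨h, hy.2⟩ h
  · simpa [bernoulliRate_zero] using
      strictAntiOn_bernoulliRate_sub_sq.antitoneOn ⟨hy.1, h⟩ ⟨by norm_num, le_rfl⟩ h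

lemma phiC_sub_sq_eq {c x : ℝ} (hc : 0 < c) (hx : x ∈ Icc (-c) c) :
    phiC c x - x ^ 2 / (2 * c ^ 2) = bernoulliRate (x / c) - (x / c) ^ 2 / 2 := by
  have hxc : x / c ∈ Icc (-1) 1 :=
    ⟨by rw [le_div_iff₀ hc]; linarith [hx.1], by rw [div_le_one hc]; exact hx.2⟩
  rw [phiC_eq_phiC_one_div hc.ne', phiC_one_eq_bernoulliRate hxc]
  field_simp

theorem phiC_sub_sq_properties (c : ℝ) (hc : 0 < c) :
    (∀ x ∈ Set.Icc (-c) c, 0 ≤ phiC c x - x ^ 2 / (2 * c ^ 2)) ∧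
    StrictMonoOn (fun x => phiC c x - x ^ 2 / (2 * c ^ 2)) (Set.Icc 0 c) ∧
    StrictAntiOn (fun x => phiC c x - x ^ 2 / (2 * c ^ 2)) (Set.Icc (-c) 0) ∧
    phiC c 0 - 0 ^ 2 / (2 * c ^ 2) = 0 := by
  have hdiv {a b x : ℝ} (hx : x ∈ Icc a b) : x / c ∈ Icc (a / c) (b / c) :=
    ⟨div_le_div_of_nonneg_right hx.1 hc.le, div_le_div_of_nonneg_right hx.2 hc.le⟩
  have hpos : Icc 0 c ⊆ Icc (-c) c := Icc_subset_Icc_left (by linarith)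
  have hneg : Icc (-c) 0 ⊆ Icc (-c) c := Icc_subset_Icc_right hc.le
  refine ⟨fun x hx => ?_, fun x hx y hy hxy => ?_, fun x hx y hy hxy => ?_, ?_⟩
  · rw [phiC_sub_sq_eq hc hx]
    exact bernoulliRate_sub_sq_nonneg (by simpa [neg_div, hc.ne'] using hdiv hx)
  · simp only [phiC_sub_sq_eq hc (hpos hx), phiC_sub_sq_eq hc (hpos hy)]
    exact strictMonoOn_bernoulliRate_sub_sq (by simpa [hc.ne'] using hdiv hx)
      (by simpa [hc.ne'] using hdiv hy) (div_lt_div_of_pos_right hxy hc)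
  · simp only [phiC_sub_sq_eq hc (hneg hx), phiC_sub_sq_eq hc (hneg hy)]
    exact strictAntiOn_bernoulliRate_sub_sq (by simpa [neg_div, hc.ne'] using hdiv hx)
      (by simpa [neg_div, hc.ne'] using hdiv hy) (div_lt_div_of_pos_right hxy hc)
  · rw [phiC_sub_sq_eq hc ⟨by linarith, hc.le⟩, zero_div, bernoulliRate_zero]
    norm_num
end

section
/- Let ρ be a symmetric probability measure on ℝ, and let u, v ∈ ℝ with u > 0, such that ∫ e^{uz+vz²} dρ(z) < ∞ and ∫ |z|² e^{uz+vz²} dρ(z) < ∞. Set x = (∫ z e^{uz+vz²} dρ(z)) / (∫ e^{uz+vz²} dρ(z)) and y = (∫ z² e^{uz+vz²} dρ(z)) / (∫ e^{uz+vz²} dρ(z)). If the support of ρ contains a nonzero point, then x < u y. -/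
open MeasureTheory

/-- The topological support of a measure on `ℝ`: points all of whose neighborhoods
have positive measure. -/
def msupport (ρ : Measure ℝ) : Set ℝ := {x | ∀ U ∈ nhds x, ρ U ≠ 0}

lemma sinh_lt_mul_cosh {x : ℝ} (hx : 0 < x) : Real.sinh x < x * Real.cosh x := by
  have h : StrictMonoOn (fun t : ℝ => t * Real.cosh t - Real.sinh t) (Set.Ici 0) := by
    apply strictMonoOn_of_deriv_pos (convex_Ici 0)
    · fun_prop
    · intro t ht
      rw [interior_Ici] at ht
      have hd : HasDerivAt (fun t : ℝ => t * Real.cosh t - Real.sinh t)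
          (1 * Real.cosh t + t * Real.sinh t - Real.cosh t) t :=
        ((hasDerivAt_id t).mul (Real.hasDerivAt_cosh t)).sub (Real.hasDerivAt_sinh t)
      rw [hd.deriv]
      have hs : 0 < Real.sinh t := Real.sinh_pos_iff.mpr ht
      have ht' : (0 : ℝ) < t := ht
      nlinarith
  have := h (Set.self_mem_Ici) (Set.mem_Ici.2 hx.le) hx
  simpa using this

lemma key_pos {u : ℝ} (hu : 0 < u) {z : ℝ} (hz : z ≠ 0) :
    0 < u * z ^ 2 * Real.cosh (u * z) - z * Real.sinh (u * z) := by
  rcases hz.lt_or_gt with h | h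
  · have h1 : Real.sinh (-(u * z)) < -(u * z) * Real.cosh (-(u * z)) :=
      sinh_lt_mul_cosh (by nlinarith)
    rw [Real.sinh_neg, Real.cosh_neg] at h1
    nlinarith
  · have h1 : Real.sinh (u * z) < u * z * Real.cosh (u * z) :=
      sinh_lt_mul_cosh (by positivity)
    nlinarith

theorem tilting_inequality (ρ : Measure ℝ) [IsProbabilityMeasure ρ]
    (hsym : ρ.map (fun z => -z) = ρ) (u v : ℝ) (hu : 0 < u)
    (hint : Integrable (fun z => Real.exp (u * z + v * z ^ 2)) ρ)
    (hint2 : Integrable (fun z => z ^ 2 * Real.exp (u * z + v * z ^ 2)) ρ)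
    (hsupp : ∃ z ∈ msupport ρ, z ≠ 0) :
    (∫ z, z * Real.exp (u * z + v * z ^ 2) ∂ρ) / (∫ z, Real.exp (u * z + v * z ^ 2) ∂ρ) <
      u * ((∫ z, z ^ 2 * Real.exp (u * z + v * z ^ 2) ∂ρ) /
        (∫ z, Real.exp (u * z + v * z ^ 2) ∂ρ)) := by
  set E : ℝ → ℝ := fun z => Real.exp (u * z + v * z ^ 2) with hE
  have hD : 0 < ∫ z, E z ∂ρ := integral_exp_pos hint
  -- integrability of z * E z
  have hintz : Integrable (fun z => z * E z) ρ := by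
    have hce : Continuous E := by rw [hE]; fun_prop
    have hm : AEStronglyMeasurable (fun z => z * E z) ρ :=
      (continuous_id.mul hce).aestronglyMeasurable
    apply (hint.add hint2).mono hm
    filter_upwards with z
    have h1 : 0 < E z := Real.exp_pos _
    have h2 : |z| ≤ 1 + z ^ 2 := by nlinarith [abs_nonneg z, sq_abs z]
    rw [Real.norm_eq_abs, Real.norm_eq_abs, abs_mul, abs_of_pos h1, Pi.add_apply,
      abs_of_pos (by nlinarith : (0:ℝ) < E z + z ^ 2 * E z)]
    nlinarith
  -- the key function
  set h : ℝ → ℝ := fun z => (u * z ^ 2 - z) * E z with hh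
  have hinth : Integrable h ρ := by
    have heq : h = fun z => u * (z ^ 2 * E z) - z * E z := by
      funext z; simp only [hh]; ring
    rw [heq]
    exact (hint2.const_mul u).sub hintz
  -- symmetry
  have hneg : ∫ z, h z ∂ρ = ∫ z, h (-z) ∂ρ := by
    conv_lhs => rw [← hsym]
    rw [integral_map (by fun_prop) (by rw [hsym]; exact hinth.1)]
  have hinthneg : Integrable (fun z => h (-z)) ρ := by
    have hm : Integrable h (ρ.map (fun z => -z)) := by rw [hsym]; exact hinth
    exact (integrable_map_measure (by rw [hsym]; exact hinth.1) (by fun_prop)).mp hm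
  -- G = h z + h (-z)
  set G : ℝ → ℝ := fun z =>
    2 * (u * z ^ 2 * Real.cosh (u * z) - z * Real.sinh (u * z)) * Real.exp (v * z ^ 2) with hG
  have hGeq : ∀ z, h z + h (-z) = G z := by
    intro z
    have e1 : E z = Real.exp (u * z) * Real.exp (v * z ^ 2) := by
      rw [hE, ← Real.exp_add]
    have e2 : E (-z) = Real.exp (-(u * z)) * Real.exp (v * z ^ 2) := by
      simp only [hE]
      rw [← Real.exp_add, show u * -z + v * (-z) ^ 2 = -(u * z) + v * z ^ 2 from by ring]
    simp only [hh, hG, Real.cosh_eq, Real.sinh_eq, e1, e2]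
    ring
  have hGint : Integrable G ρ := by
    have heq : G = fun z => h z + h (-z) := by funext z; rw [← hGeq]
    rw [heq]; exact hinth.add hinthneg
  have hGpos' : ∀ z : ℝ, z ≠ 0 → 0 < G z := by
    intro z hz
    have h1 := key_pos hu hz
    have h2 := Real.exp_pos (v * z ^ 2)
    simp only [hG]; positivity
  have hGnonneg : ∀ z, 0 ≤ G z := by
    intro z
    rcases eq_or_ne z 0 with rfl | hz
    · simp [hG]
    · exact (hGpos' z hz).le
  -- positivity of ∫ G
  have hGpos : 0 < ∫ z, G z ∂ρ := by
    rw [integral_pos_iff_support_of_nonneg hGnonneg hGint]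
    obtain ⟨z₀, hz₀, hz₀ne⟩ := hsupp
    have hsub : ({0}ᶜ : Set ℝ) ⊆ Function.support G :=
      fun z hz => ne_of_gt (hGpos' z hz)
    have h0 : ρ ({0}ᶜ : Set ℝ) ≠ 0 :=
      hz₀ _ (isOpen_compl_singleton.mem_nhds (by simpa using hz₀ne))
    calc (0 : ENNReal) < ρ ({0}ᶜ : Set ℝ) := pos_iff_ne_zero.mpr h0
    _ ≤ ρ (Function.support G) := measure_mono hsub
  -- ∫ h > 0
  have hhpos : 0 < ∫ z, h z ∂ρ := by
    have hsum : ∫ z, G z ∂ρ = 2 * ∫ z, h z ∂ρ := by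
      have h1 : ∫ z, G z ∂ρ = (∫ z, h z ∂ρ) + ∫ z, h (-z) ∂ρ := by
        rw [← integral_add hinth hinthneg]
        congr 1; funext z; rw [← hGeq]
      rw [h1, ← hneg]; ring
    linarith [hsum ▸ hGpos]
  -- conclude
  have key : (∫ z, z * E z ∂ρ) < u * ∫ z, z ^ 2 * E z ∂ρ := by
    have h1 : ∫ z, h z ∂ρ = u * (∫ z, z ^ 2 * E z ∂ρ) - ∫ z, z * E z ∂ρ := by
      rw [← integral_const_mul, ← integral_sub (hint2.const_mul u) hintz]
      congr 1; funext z; simp only [hh]; ring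
    linarith [h1 ▸ hhpos]
  rw [← mul_div_assoc]
  exact div_lt_div_of_pos_right key hD
end

section
/- Let ρ be a symmetric nondegenerate probability measure on ℝ, and let I be the Cramér transform of the law of (Z, Z²) with Z ~ ρ. Then for all (x, y) with x² ≤ y and (x,y) ≠ (0,0), and all ε with 0 ≤ ε < |x|, one has I(x, y) − x²/(2y) ≥ I(ε, y) − ε²/(2y). -/
open MeasureTheory ENNReal

/-!
By symmetry of `ρ`, `lapCW ρ u v = ∫ cosh (u z) e^{v z²} dρ`. Since `t ↦ cosh t · e^{-t²/2}` is
decreasing on `[0, ∞)`, the Laplace transform does not increase under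
`(u, v) ↦ (u', v + (u² - u'²)/2)` when `|u| ≤ |u'|`. For `0 ≤ ε ≤ x` and `y > 0`, the choice
`u' = |u| + (x - ε)/y` gives `x u' + y v' ≥ ε u + y v + (x² - ε²)/(2y)`, hence
`I(ε, y) + (x² - ε²)/(2y) ≤ I(x, y)`; the general case follows since `I` is even in `x`.
-/

namespace Real

lemma sinh_le_mul_cosh {t : ℝ} (ht : 0 ≤ t) : sinh t ≤ t * cosh t := by
  have hmono : MonotoneOn (fun s : ℝ => s * cosh s - sinh s) (Set.Ici 0) := by
    refine monotoneOn_of_deriv_nonneg (convex_Ici 0) (by fun_prop) (by fun_prop) fun s hs => ?_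
    rw [interior_Ici, Set.mem_Ioi] at hs
    have hderiv : HasDerivAt (fun s : ℝ => s * cosh s - sinh s)
        (1 * cosh s + s * sinh s - cosh s) s :=
      ((hasDerivAt_id s).mul (hasDerivAt_cosh s)).sub (hasDerivAt_sinh s)
    rw [hderiv.deriv]
    nlinarith [sinh_nonneg_iff.2 hs.le]
  simpa using hmono Set.self_mem_Ici ht ht

lemma antitoneOn_cosh_mul_exp_neg_sq_div_two :
    AntitoneOn (fun t : ℝ => cosh t * exp (-(t ^ 2) / 2)) (Set.Ici 0) := by
  refine antitoneOn_of_deriv_nonpos (convex_Ici 0) (by fun_prop) (by fun_prop) fun t ht => ?_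
  rw [interior_Ici, Set.mem_Ioi] at ht
  have hquad : HasDerivAt (fun t : ℝ => -(t ^ 2) / 2) (-t) t :=
    ((hasDerivAt_pow 2 t).fun_neg.div_const 2).congr_deriv (by ring)
  have hderiv : HasDerivAt (fun t : ℝ => cosh t * exp (-(t ^ 2) / 2))
      (sinh t * exp (-(t ^ 2) / 2) + cosh t * (exp (-(t ^ 2) / 2) * -t)) t :=
    (hasDerivAt_cosh t).mul hquad.exp
  rw [hderiv.deriv]
  nlinarith [sinh_le_mul_cosh ht.le, exp_pos (-(t ^ 2) / 2)]

lemma cosh_mul_exp_neg_sq_div_two_le {a b : ℝ} (hab : |a| ≤ |b|) :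
    cosh b * exp (-(b ^ 2) / 2) ≤ cosh a * exp (-(a ^ 2) / 2) := by
  simpa only [cosh_abs, sq_abs] using
    antitoneOn_cosh_mul_exp_neg_sq_div_two (abs_nonneg a) ((abs_nonneg a).trans hab) hab

end Real

lemma EReal.coe_sub_add_coe_le {r s c : ℝ} {L L' : EReal} (hL : L' ≤ L) (h : r + c ≤ s) :
    (r : EReal) - L + c ≤ s - L' :=
  calc (r : EReal) - L + c = ((r + c : ℝ) : EReal) - L := by
        rw [sub_eq_add_neg, sub_eq_add_neg, add_right_comm, EReal.coe_add]
    _ ≤ s - L' := EReal.sub_le_sub (by exact_mod_cast h) hL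

lemma EReal.sub_coe_le_sub_coe_of_add_le {A B : EReal} {a b : ℝ}
    (h : A + ((b - a : ℝ) : EReal) ≤ B) : A - a ≤ B - b := by
  rw [EReal.le_sub_iff_add_le (.inl (EReal.coe_ne_bot _)) (.inl (EReal.coe_ne_top _)),
    sub_eq_add_neg, add_assoc, ← EReal.coe_neg, ← EReal.coe_add, neg_add_eq_sub]
  exact h

section Symmetric

variable {ρ : Measure ℝ} (hsym : ρ.map (fun z => -z) = ρ)
include hsym

lemma lapCW_neg (u v : ℝ) : lapCW ρ (-u) v = lapCW ρ u v := by
  conv_rhs => rw [lapCW, ← hsym]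
  rw [lintegral_map (by fun_prop) (by fun_prop), lapCW]
  simp only [neg_mul, mul_neg, even_two, Even.neg_pow]

lemma lapCW_eq_lintegral_cosh (u v : ℝ) :
    lapCW ρ u v = ∫⁻ z, ENNReal.ofReal (Real.cosh (u * z) * Real.exp (v * z ^ 2)) ∂ρ := by
  refine (ENNReal.mul_right_inj two_ne_zero ofNat_ne_top).1 ?_
  calc 2 * lapCW ρ u v = lapCW ρ u v + lapCW ρ (-u) v := by rw [lapCW_neg hsym, two_mul]
    _ = ∫⁻ z, ENNReal.ofReal (Real.exp (u * z + v * z ^ 2))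
          + ENNReal.ofReal (Real.exp (-u * z + v * z ^ 2)) ∂ρ :=
        (lintegral_add_left (by fun_prop) _).symm
    _ = ∫⁻ z, 2 * ENNReal.ofReal (Real.cosh (u * z) * Real.exp (v * z ^ 2)) ∂ρ := by
        refine lintegral_congr fun z => ?_
        rw [← ENNReal.ofReal_add (Real.exp_pos _).le (Real.exp_pos _).le,
          ← ENNReal.ofReal_ofNat 2, ← ENNReal.ofReal_mul zero_le_two, Real.cosh_eq,
          Real.exp_add, Real.exp_add]
        ring_nf
    _ = 2 * ∫⁻ z, ENNReal.ofReal (Real.cosh (u * z) * Real.exp (v * z ^ 2)) ∂ρ :=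
        lintegral_const_mul _ (by fun_prop)

lemma lapCW_shift_le {u u' : ℝ} (h : |u| ≤ |u'|) (v : ℝ) :
    lapCW ρ u' (v + (u ^ 2 - u' ^ 2) / 2) ≤ lapCW ρ u v := by
  rw [lapCW_eq_lintegral_cosh hsym, lapCW_eq_lintegral_cosh hsym]
  refine lintegral_mono fun z => ENNReal.ofReal_le_ofReal ?_
  have hz : |u * z| ≤ |u' * z| := by
    rw [abs_mul, abs_mul]
    exact mul_le_mul_of_nonneg_right h (abs_nonneg z)
  have hsplit : ∀ w : ℝ, Real.exp ((v + (u ^ 2 - w ^ 2) / 2) * z ^ 2)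
      = Real.exp (-((w * z) ^ 2) / 2) * Real.exp (v * z ^ 2 + (u * z) ^ 2 / 2) := fun w => by
    rw [← Real.exp_add]; ring_nf
  have hgain := mul_le_mul_of_nonneg_right (Real.cosh_mul_exp_neg_sq_div_two_le hz)
    (Real.exp_pos (v * z ^ 2 + (u * z) ^ 2 / 2)).le
  calc Real.cosh (u' * z) * Real.exp ((v + (u ^ 2 - u' ^ 2) / 2) * z ^ 2)
      ≤ Real.cosh (u * z) * Real.exp ((v + (u ^ 2 - u ^ 2) / 2) * z ^ 2) := by
        rw [hsplit, hsplit, ← mul_assoc, ← mul_assoc]; exact hgain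
    _ = Real.cosh (u * z) * Real.exp (v * z ^ 2) := by ring_nf

lemma cramCW_neg (x y : ℝ) : cramCW ρ (-x) y = cramCW ρ x y := by
  rw [cramCW, cramCW, ← (Equiv.prodCongr (Equiv.neg ℝ) (Equiv.refl ℝ)).iSup_comp]
  congr! 3 with p
  · simp
  · simp [lapCW_neg hsym]

lemma cramCW_abs (x y : ℝ) : cramCW ρ |x| y = cramCW ρ x y := by
  rcases abs_choice x with h | h <;> rw [h]
  exact cramCW_neg hsym x y

lemma cramCW_add_le {x y ε : ℝ} (hy : 0 < y) (hε0 : 0 ≤ ε) (hεx : ε ≤ x) :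
    cramCW ρ ε y + ((x ^ 2 - ε ^ 2) / (2 * y) : ℝ) ≤ cramCW ρ x y := by
  rw [← EReal.le_sub_iff_add_le (.inl (EReal.coe_ne_bot _)) (.inl (EReal.coe_ne_top _)),
    cramCW]
  refine iSup_le fun ⟨u, v⟩ => ?_
  rw [EReal.le_sub_iff_add_le (.inl (EReal.coe_ne_bot _)) (.inl (EReal.coe_ne_top _))]
  set u' := |u| + (x - ε) / y
  have hu' : |u| ≤ |u'| := by
    have : 0 ≤ (x - ε) / y := div_nonneg (by linarith) hy.le
    rw [abs_of_nonneg (by positivity : 0 ≤ u')]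
    linarith
  refine le_trans ?_ (le_iSup _ (u', v + (u ^ 2 - u' ^ 2) / 2))
  refine EReal.coe_sub_add_coe_le (ENNReal.log_monotone (lapCW_shift_le hsym hu' v)) ?_
  have hεu : ε * u ≤ ε * |u| := mul_le_mul_of_nonneg_left (le_abs_self u) hε0
  have hgain : x * u' + y * (v + (|u| ^ 2 - u' ^ 2) / 2)
      = ε * |u| + y * v + (x ^ 2 - ε ^ 2) / (2 * y) := by
    simp only [u']; field_simp; ring
  rw [sq_abs] at hgain
  dsimp only
  linarith

end Symmetric

theorem cramCW_sub_F_ge_general (ρ : Measure ℝ)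
    (hsym : ρ.map (fun z => -z) = ρ)
    (x y ε : ℝ) (hxy : x ^ 2 ≤ y) (hε0 : 0 ≤ ε) (hε : ε < |x|) :
    cramCW ρ ε y - ((ε ^ 2 / (2 * y) : ℝ) : EReal) ≤
      cramCW ρ x y - ((x ^ 2 / (2 * y) : ℝ) : EReal) := by
  have hy : 0 < y := (sq_pos_of_pos (hε0.trans_lt hε)).trans_le (by rwa [sq_abs])
  refine EReal.sub_coe_le_sub_coe_of_add_le ?_
  rw [← cramCW_abs hsym x, ← sq_abs x, ← sub_div]
  exact cramCW_add_le hsym hy hε0 hε.le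

theorem cramCW_sub_F_ge (ρ : Measure ℝ) [IsProbabilityMeasure ρ]
    (hsym : ρ.map (fun z => -z) = ρ) (hnondeg : ∀ a : ℝ, ρ ≠ Measure.dirac a)
    (x y ε : ℝ) (hxy : x ^ 2 ≤ y) (hne : (x, y) ≠ (0, 0)) (hε0 : 0 ≤ ε) (hε : ε < |x|) :
    cramCW ρ ε y - ((ε ^ 2 / (2 * y) : ℝ) : EReal) ≤
      cramCW ρ x y - ((x ^ 2 / (2 * y) : ℝ) : EReal) :=
  cramCW_sub_F_ge_general ρ hsym x y ε hxy hε0 hε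
end

section
/- Let ρ be a symmetric probability measure on ℝ with variance σ² > 0 such that Λ(u,v) = ln ∫ e^{uz+vz²} dρ(z) is finite in a neighborhood of (0,0). Then the function (x,y) ↦ I(x,y) − x²/(2y) on Δ* = {(x,y) : x² ≤ y, (x,y) ≠ (0,0)} is nonnegative and attains the value 0 only at the point (0, σ²). -/
/-
For x ≠ 0, testing the supremum defining I at (u, v) = (x/y, -u²/2) gives
I(x,y) ≥ x²/(2y) - Λ(u,v), and by symmetry of ρ,
e^{Λ(u,v)} = E[cosh(uZ) e^{-(uZ)²/2}] < 1, because cosh t < e^{t²/2} for t ≠ 0 and Z ≠ 0 with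
positive probability. On the axis x = 0, Jensen's inequality Λ(u,v) ≥ vσ² gives I(0,σ²) = 0,
while for y ≠ σ² the function v ↦ yv - Λ(0,v) vanishes at 0 with derivative y - σ² ≠ 0, so it
cannot have a local maximum there and I(0,y) > 0.
-/

open MeasureTheory ENNReal

open ProbabilityTheory Filter

lemma Real.cosh_lt_exp_half_sq {t : ℝ} (ht : t ≠ 0) : Real.cosh t < Real.exp (t ^ 2 / 2) := by
  rw [Real.cosh_eq_tsum, Real.exp_eq_exp_ℝ, NormedSpace.exp_eq_tsum ℝ]
  -- strict at the index-2 terms: t⁴/4! < (t²/2)²/2!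
  refine t.hasSum_cosh.summable.tsum_lt_tsum (i := 2) (fun i ↦ ?_) ?_
    (NormedSpace.expSeries_summable' (t ^ 2 / 2))
  · simp only [div_pow, pow_mul, smul_eq_mul, inv_mul_eq_div, div_div]
    gcongr
    exact_mod_cast Nat.two_pow_mul_factorial_le_factorial_two_mul _
  · have : 0 < t ^ 4 := by positivity
    norm_num [Nat.factorial]
    linarith

lemma Real.cosh_mul_exp_neg_half_sq_le_one (t : ℝ) :
    Real.cosh t * Real.exp (-(t ^ 2 / 2)) ≤ 1 := by
  rw [Real.exp_neg, ← div_eq_mul_inv, div_le_one (Real.exp_pos _)]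
  exact Real.cosh_le_exp_half_sq t

lemma Real.cosh_mul_exp_neg_half_sq_lt_one {t : ℝ} (ht : t ≠ 0) :
    Real.cosh t * Real.exp (-(t ^ 2 / 2)) < 1 := by
  rw [Real.exp_neg, ← div_eq_mul_inv, div_lt_one (Real.exp_pos _)]
  exact Real.cosh_lt_exp_half_sq ht

lemma integral_lt_of_le_of_lt_on {α : Type*} [MeasurableSpace α] {μ : Measure α}
    [IsProbabilityMeasure μ] {g : α → ℝ} {c : ℝ} {s : Set α} (hg : Integrable g μ)
    (hle : ∀ a, g a ≤ c) (hlt : ∀ a ∈ s, g a < c) (hs : μ s ≠ 0) : ∫ a, g a ∂μ < c := by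
  have hpos : 0 < ∫ a, (c - g a) ∂μ := by
    rw [integral_pos_iff_support_of_nonneg (fun a => sub_nonneg.2 (hle a))
      ((integrable_const c).sub hg)]
    exact (pos_iff_ne_zero.2 hs).trans_le
      (measure_mono fun a ha => sub_ne_zero.2 (hlt a ha).ne')
  rw [integral_sub (integrable_const c) hg, integral_const, probReal_univ, one_smul] at hpos
  linarith

lemma integrable_exp_mul_sub_half_sq (μ : Measure ℝ) [IsFiniteMeasure μ] (u : ℝ) :
    Integrable (fun z => Real.exp (u * z + -(u ^ 2 / 2) * z ^ 2)) μ := by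
  refine Integrable.mono' (integrable_const (Real.exp (1 / 2))) (by fun_prop)
    (.of_forall fun z => ?_)
  rw [Real.norm_of_nonneg (Real.exp_pos _).le, Real.exp_le_exp]
  nlinarith [sq_nonneg (u * z - 1)]

lemma integral_exp_mul_sub_half_sq_lt_one (ρ : Measure ℝ) [IsProbabilityMeasure ρ]
    [ρ.IsNegInvariant] (hρ : ρ {0}ᶜ ≠ 0) {u : ℝ} (hu : u ≠ 0) :
    ∫ z, Real.exp (u * z + -(u ^ 2 / 2) * z ^ 2) ∂ρ < 1 := by
  set f : ℝ → ℝ := fun z => Real.exp (u * z + -(u ^ 2 / 2) * z ^ 2)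
  have hf : Integrable f ρ := integrable_exp_mul_sub_half_sq ρ u
  have hcosh : ∀ z, (f z + f (-z)) / 2 = Real.cosh (u * z) * Real.exp (-((u * z) ^ 2 / 2)) := by
    intro z
    simp only [f]
    rw [Real.cosh_eq, div_mul_eq_mul_div, add_mul, ← Real.exp_add, ← Real.exp_add]
    ring_nf
  have hsymm : ∫ z, f z ∂ρ = ∫ z, (f z + f (-z)) / 2 ∂ρ := by
    rw [integral_div, integral_add hf hf.comp_neg, integral_neg_eq_self]
    ring
  simp only [hsymm, hcosh]
  refine integral_lt_of_le_of_lt_on ((hf.add hf.comp_neg).div_const 2 |>.congr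
    (.of_forall hcosh)) (fun z => Real.cosh_mul_exp_neg_half_sq_le_one _)
    (fun z hz => Real.cosh_mul_exp_neg_half_sq_lt_one (mul_ne_zero hu hz)) hρ

section LaplaceTransform

variable {ρ : Measure ℝ} {u v : ℝ}

lemma integrable_of_lapCW_ne_top (h : lapCW ρ u v ≠ ⊤) :
    Integrable (fun z => Real.exp (u * z + v * z ^ 2)) ρ :=
  (lintegral_ofReal_ne_top_iff_integrable (by fun_prop)
    (.of_forall fun _ => (Real.exp_pos _).le)).1 h

lemma lapCW_eq_ofReal_integral (h : Integrable (fun z => Real.exp (u * z + v * z ^ 2)) ρ) :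
    lapCW ρ u v = ENNReal.ofReal (∫ z, Real.exp (u * z + v * z ^ 2) ∂ρ) :=
  (ofReal_integral_eq_lintegral_ofReal h (.of_forall fun _ => (Real.exp_pos _).le)).symm

lemma coe_sub_log_integral_le_cramCW [NeZero ρ] (x y : ℝ)
    (h : Integrable (fun z => Real.exp (u * z + v * z ^ 2)) ρ) :
    ((x * u + y * v - Real.log (∫ z, Real.exp (u * z + v * z ^ 2) ∂ρ) : ℝ) : EReal) ≤
      cramCW ρ x y := by
  have hlog : ENNReal.log (lapCW ρ u v) = Real.log (∫ z, Real.exp (u * z + v * z ^ 2) ∂ρ) := by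
    rw [lapCW_eq_ofReal_integral h, ENNReal.log_ofReal_of_pos (integral_exp_pos h)]
  rw [EReal.coe_sub, ← hlog]
  exact le_iSup (fun p : ℝ × ℝ => ((x * p.1 + y * p.2 : ℝ) : EReal) -
    ENNReal.log (lapCW ρ p.1 p.2)) (u, v)

end LaplaceTransform

lemma ofReal_exp_moments_le_lapCW {ρ : Measure ℝ} [IsProbabilityMeasure ρ]
    (h2 : Integrable (fun z => z ^ 2) ρ) (u v : ℝ) :
    ENNReal.ofReal (Real.exp (u * ∫ z, z ∂ρ + v * ∫ z, z ^ 2 ∂ρ)) ≤ lapCW ρ u v := by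
  by_cases hlap : lapCW ρ u v = ⊤
  · exact hlap ▸ le_top
  have h1 : Integrable (fun z => z) ρ :=
    ((memLp_two_iff_integrable_sq (by fun_prop)).2 h2).integrable one_le_two
  have hlin : Integrable (fun z => u * z + v * z ^ 2) ρ := (h1.const_mul u).add (h2.const_mul v)
  rw [lapCW_eq_ofReal_integral (integrable_of_lapCW_ne_top hlap)]
  refine ENNReal.ofReal_le_ofReal ?_
  rw [← integral_const_mul, ← integral_const_mul, ← integral_add (h1.const_mul u) (h2.const_mul v)]
  exact convexOn_exp.map_integral_le Real.continuous_exp.continuousOn isClosed_univ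
    (.of_forall fun _ => trivial) hlin (integrable_of_lapCW_ne_top hlap)

lemma cramCW_moments_eq_zero (ρ : Measure ℝ) [IsProbabilityMeasure ρ]
    (h2 : Integrable (fun z => z ^ 2) ρ) : cramCW ρ (∫ z, z ∂ρ) (∫ z, z ^ 2 ∂ρ) = 0 := by
  refine le_antisymm (iSup_le fun p => ?_) ?_
  · have hlog := ENNReal.log_monotone (ofReal_exp_moments_le_lapCW h2 p.1 p.2)
    rw [ENNReal.log_ofReal_of_pos (Real.exp_pos _), Real.log_exp] at hlog
    calc _ ≤ (((∫ z, z ∂ρ) * p.1 + (∫ z, z ^ 2 ∂ρ) * p.2 : ℝ) : EReal) -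
          ((p.1 * ∫ z, z ∂ρ + p.2 * ∫ z, z ^ 2 ∂ρ : ℝ) : EReal) := EReal.sub_le_sub le_rfl hlog
      _ = 0 := by rw [← EReal.coe_sub, ← EReal.coe_zero, EReal.coe_eq_coe_iff]; ring
  · simpa using coe_sub_log_integral_le_cramCW (ρ := ρ) (u := 0) (v := 0)
      (∫ z, z ∂ρ) (∫ z, z ^ 2 ∂ρ) (by simp)

lemma sq_div_lt_cramCW (ρ : Measure ℝ) [IsProbabilityMeasure ρ] [ρ.IsNegInvariant]
    (hρ : ρ {0}ᶜ ≠ 0) {x y : ℝ} (hx : x ≠ 0) (hy : 0 < y) :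
    ((x ^ 2 / (2 * y) : ℝ) : EReal) < cramCW ρ x y := by
  set u := x / y
  have hint := integrable_exp_mul_sub_half_sq ρ u
  have hlog : Real.log (∫ z, Real.exp (u * z + -(u ^ 2 / 2) * z ^ 2) ∂ρ) < 0 :=
    Real.log_neg (integral_exp_pos hint)
      (integral_exp_mul_sub_half_sq_lt_one ρ hρ (div_ne_zero hx hy.ne'))
  have hval : x * u + y * -(u ^ 2 / 2) = x ^ 2 / (2 * y) := by
    simp only [u]; field_simp; ring
  refine lt_of_lt_of_le ?_ (coe_sub_log_integral_le_cramCW x y hint)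
  exact EReal.coe_lt_coe_iff.2 (by linarith)

lemma cramCW_zero_pos (ρ : Measure ℝ) [IsProbabilityMeasure ρ]
    (h0 : 0 ∈ interior (integrableExpSet (fun z => z ^ 2) ρ)) {y : ℝ}
    (hy : y ≠ ∫ z, z ^ 2 ∂ρ) : 0 < cramCW ρ 0 y := by
  by_contra! hle
  set G : ℝ → ℝ := fun v => y * v - cgf (fun z => z ^ 2) ρ v
  have hG : HasDerivAt G (y - ∫ z, z ^ 2 ∂ρ) 0 := by
    have hcgf := (analyticAt_cgf h0).differentiableAt.hasDerivAt
    rw [deriv_cgf_zero h0, probReal_univ, div_one] at hcgf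
    simpa using ((hasDerivAt_id' (0 : ℝ)).const_mul y).fun_sub hcgf
  have hmax : IsLocalMax G 0 := by
    filter_upwards [isOpen_interior.mem_nhds h0] with v hv
    have hv' : Integrable (fun z => Real.exp (0 * z + v * z ^ 2)) ρ := by
      simpa using integrable_of_mem_integrableExpSet (interior_subset hv)
    have := (coe_sub_log_integral_le_cramCW 0 y hv').trans hle
    rw [← EReal.coe_zero, EReal.coe_le_coe_iff] at this
    simpa [G, cgf, mgf, cgf_zero] using this
  exact hy (sub_eq_zero.1 (hmax.hasDerivAt_eq_zero hG))

theorem cramCW_sub_F_unique_min (ρ : Measure ℝ) [IsProbabilityMeasure ρ]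
    (hsym : ρ.map (fun z => -z) = ρ) (σ2 : ℝ) (hσ2 : 0 < σ2)
    (hvar : ∫ z, z ^ 2 ∂ρ = σ2)
    (hdom : ∃ ε > 0, ∀ u v : ℝ, |u| < ε → |v| < ε → lapCW ρ u v < ⊤) :
    ∀ x y : ℝ, x ^ 2 ≤ y → (x, y) ≠ (0, 0) →
      (0 ≤ cramCW ρ x y - ((x ^ 2 / (2 * y) : ℝ) : EReal) ∧
        (cramCW ρ x y - ((x ^ 2 / (2 * y) : ℝ) : EReal) = 0 ↔ (x, y) = (0, σ2))) := by
  have : ρ.IsNegInvariant := ⟨hsym⟩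
  have hsq : Integrable (fun z => z ^ 2) ρ := .of_integral_ne_zero (hvar ▸ hσ2.ne')
  have hmean : ∫ z, z ∂ρ = 0 := by
    have := integral_neg_eq_self (fun z => z) ρ
    rw [integral_neg] at this
    linarith
  have hρ : ρ {0}ᶜ ≠ 0 := fun h0 => hσ2.ne' <| hvar ▸ integral_eq_zero_of_ae <| by
    filter_upwards [measure_eq_zero_iff_ae_notMem.1 h0] with z hz
    simp_all
  have h0 : 0 ∈ interior (integrableExpSet (fun z => z ^ 2) ρ) := by
    obtain ⟨ε, hε, hlap⟩ := hdom
    refine mem_interior_iff_mem_nhds.2 (mem_of_superset (Ioo_mem_nhds (neg_neg_iff_pos.2 hε) hε)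
      fun v hv => ?_)
    simpa [integrableExpSet] using
      integrable_of_lapCW_ne_top (hlap 0 v (by simpa) (abs_lt.2 hv)).ne
  intro x y hxy _
  by_cases hmin : (x, y) = (0, σ2)
  · obtain ⟨rfl, rfl⟩ := Prod.mk.inj hmin
    have hzero := cramCW_moments_eq_zero ρ hsq
    rw [hmean, hvar] at hzero
    simp [hzero]
  have hlt : ((x ^ 2 / (2 * y) : ℝ) : EReal) < cramCW ρ x y := by
    rcases eq_or_ne x 0 with rfl | hx
    · simpa using cramCW_zero_pos ρ h0 (fun hy => hmin (by rw [hy, hvar]))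
    · exact sq_div_lt_cramCW ρ hρ hx ((by positivity : 0 < x ^ 2).trans_le hxy)
  have hpos := EReal.sub_pos.2 hlt
  exact ⟨hpos.le, iff_of_false hpos.ne' hmin⟩
end

section
/- Let ρ be a probability measure on ℝ with density f with respect to Lebesgue measure, and let ν_ρ be the law of (Z, Z²) for Z ~ ρ. Then the convolution ν_ρ * ν_ρ has density f₂(x,y) = (2y − x²)^{−1/2} f((x + √(2y − x²))/2) f((x − √(2y − x²))/2) · 1_{x² < 2y} with respect to Lebesgue measure on ℝ². -/
/-!
If `Z₁, Z₂` are independent with law `ρ`, then `ν_ρ ∗ ν_ρ` is the law of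
`Φ (Z₁, Z₂) = (Z₁ + Z₂, Z₁² + Z₂²)`. The map `Φ` is symmetric and `ρ ⊗ ρ` does not charge the
diagonal, so this law is twice the push-forward of `ρ ⊗ ρ` restricted to the half-plane `z < t`.
There `Φ` is injective onto `{u² < 2v}`, with inverse
`(u, v) ↦ ((u - √(2v - u²)) / 2, (u + √(2v - u²)) / 2)` and Jacobian `2 (t - z) = 2 √(2v - u²)`,
so the change of variables formula gives the density.
-/

open MeasureTheory Set
open scoped ENNReal

namespace MeasureTheory.Measure

theorem conv_map_map {α M : Type*} [MeasurableSpace α] [AddMonoid M] [MeasurableSpace M]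
    [MeasurableAdd₂ M] {g₁ g₂ : α → M} (hg₁ : Measurable g₁) (hg₂ : Measurable g₂)
    (μ ν : Measure α) [SFinite μ] [SFinite ν] :
    (μ.map g₁) ∗ (ν.map g₂) = (μ.prod ν).map fun p => g₁ p.1 + g₂ p.2 := by
  rw [conv, map_prod_map _ _ hg₁ hg₂, map_map (by fun_prop) (hg₁.prodMap hg₂)]
  rfl

theorem map_withDensity_comp {α β : Type*} [MeasurableSpace α] [MeasurableSpace β]
    (ν : Measure α) {g : α → β} (hg : Measurable g) {h : β → ℝ≥0∞} (hh : Measurable h) :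
    (ν.withDensity (h ∘ g)).map g = (ν.map g).withDensity h := by
  ext s hs
  rw [map_apply hg hs, withDensity_apply _ (hg hs), withDensity_apply _ hs,
    setLIntegral_map hs hh hg]
  rfl

theorem prod_diagonal_eq_zero {α : Type*} [MeasurableSpace α] [MeasurableEq α]
    (μ ν : Measure α) [SFinite ν] [NullSingletonClass ν] :
    (μ.prod ν) (diagonal α) = 0 := by
  rw [measure_prod_null measurableSet_diagonal]
  refine Filter.Eventually.of_forall fun x => ?_
  simp [Set.preimage, diagonal]

section Symmetric

variable {α β : Type*} [TopologicalSpace α] [LinearOrder α] [OrderClosedTopology α]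
  [SecondCountableTopology α] [MeasurableSpace α] [BorelSpace α] [MeasurableSpace β]

theorem map_prod_self_eq_two_smul_map_restrict_lt (ρ : Measure α) [SFinite ρ]
    [NullSingletonClass ρ] {g : α × α → β} (hg : Measurable g) (hsymm : g ∘ Prod.swap = g) :
    (ρ.prod ρ).map g = (2 : ℝ≥0∞) • ((ρ.prod ρ).restrict {p | p.1 < p.2}).map g := by
  set μ := ρ.prod ρ
  have hgt : μ.restrict {p | p.1 < p.2}ᶜ = (μ.restrict {p | p.1 < p.2}).map Prod.swap := by
    have hdiag : μ.restrict {p | p.1 < p.2}ᶜ = μ.restrict {p | p.2 < p.1} := by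
      refine restrict_congr_set (ae_eq_set.2 ⟨?_, ?_⟩) <;>
      refine measure_mono_null (fun p hp => ?_) (prod_diagonal_eq_zero ρ ρ) <;>
      simp [diagonal] at hp ⊢ <;> order
    have hswap : μ.map Prod.swap = μ := prod_swap
    conv_lhs => rw [hdiag, ← hswap]
    exact restrict_map measurable_swap (measurableSet_lt measurable_snd measurable_fst)
  calc μ.map g = (μ.restrict {p | p.1 < p.2}).map g + (μ.restrict {p | p.1 < p.2}ᶜ).map g := by
        rw [← Measure.map_add _ _ hg, restrict_add_restrict_compl measurableSet_lt']
    _ = (2 : ℝ≥0∞) • (μ.restrict {p | p.1 < p.2}).map g := by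
        rw [hgt, map_map hg measurable_swap, hsymm, two_smul]

end Symmetric

end MeasureTheory.Measure

noncomputable section

def powerSums (p : ℝ × ℝ) : ℝ × ℝ := (p.1 + p.2, p.1 ^ 2 + p.2 ^ 2)

def powerSumsDeriv (p : ℝ × ℝ) : ℝ × ℝ →L[ℝ] ℝ × ℝ :=
  (ContinuousLinearMap.fst ℝ ℝ ℝ + ContinuousLinearMap.snd ℝ ℝ ℝ).prod
    ((2 * p.1) • ContinuousLinearMap.fst ℝ ℝ ℝ + (2 * p.2) • ContinuousLinearMap.snd ℝ ℝ ℝ)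

def powerSumsDensity (f : ℝ → ℝ) (q : ℝ × ℝ) : ℝ :=
  (2 * q.2 - q.1 ^ 2) ^ (-(1 / 2 : ℝ)) * f ((q.1 + √(2 * q.2 - q.1 ^ 2)) / 2) *
    f ((q.1 - √(2 * q.2 - q.1 ^ 2)) / 2)

end

theorem measurable_powerSums : Measurable powerSums := by
  unfold powerSums
  fun_prop

theorem powerSums_comp_swap : powerSums ∘ Prod.swap = powerSums := by
  ext p <;> simp [powerSums] <;> ring

theorem hasFDerivAt_powerSums (p : ℝ × ℝ) : HasFDerivAt powerSums (powerSumsDeriv p) p := by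
  have hfst : HasFDerivAt (𝕜 := ℝ) Prod.fst (ContinuousLinearMap.fst ℝ ℝ ℝ) p := hasFDerivAt_fst
  have hsnd : HasFDerivAt (𝕜 := ℝ) Prod.snd (ContinuousLinearMap.snd ℝ ℝ ℝ) p := hasFDerivAt_snd
  refine ((hfst.add hsnd).prodMk ((hfst.pow 2).add (hsnd.pow 2))).congr_fderiv ?_
  ext <;> simp [powerSumsDeriv]

theorem det_powerSumsDeriv (p : ℝ × ℝ) : (powerSumsDeriv p).det = 2 * (p.2 - p.1) := by
  rw [ContinuousLinearMap.det, ← LinearMap.det_toMatrix (Module.Basis.finTwoProd ℝ),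
    Matrix.det_fin_two]
  simp [LinearMap.toMatrix_apply, powerSumsDeriv]
  ring

theorem two_mul_snd_powerSums_sub_sq (p : ℝ × ℝ) :
    2 * (powerSums p).2 - (powerSums p).1 ^ 2 = (p.2 - p.1) ^ 2 := by
  simp only [powerSums]
  ring

theorem injOn_powerSums : InjOn powerSums {p | p.1 < p.2} := by
  intro p hp p' hp' h
  have hsum : p.1 + p.2 = p'.1 + p'.2 := congrArg Prod.fst h
  have hdiff : p.2 - p.1 = p'.2 - p'.1 := by
    have hsq := two_mul_snd_powerSums_sub_sq p
    rw [h, two_mul_snd_powerSums_sub_sq] at hsq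
    exact (pow_left_inj₀ (sub_nonneg.2 hp.le) (sub_nonneg.2 hp'.le) two_ne_zero).1 hsq.symm
  exact Prod.ext (by linarith) (by linarith)

theorem powerSums_image_lt : powerSums '' {p | p.1 < p.2} = {q | q.1 ^ 2 < 2 * q.2} := by
  ext q
  constructor
  · rintro ⟨p, hp, rfl⟩
    have hsq := two_mul_snd_powerSums_sub_sq p
    simp only [mem_ofPred_eq] at hp ⊢
    nlinarith
  · intro hq
    simp only [mem_ofPred_eq] at hq
    set r := √(2 * q.2 - q.1 ^ 2)
    have hr : 0 < r := Real.sqrt_pos.2 (by linarith)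
    have hr2 : r ^ 2 = 2 * q.2 - q.1 ^ 2 := Real.sq_sqrt (by linarith)
    refine ⟨((q.1 - r) / 2, (q.1 + r) / 2), by simp only [mem_ofPred_eq]; linarith, ?_⟩
    ext <;> simp only [powerSums] <;> nlinarith

theorem measurable_powerSumsDensity {f : ℝ → ℝ} (hf : Measurable f) :
    Measurable (powerSumsDensity f) := by
  unfold powerSumsDensity
  fun_prop

theorem powerSumsDensity_powerSums (f : ℝ → ℝ) {p : ℝ × ℝ} (hp : p.1 < p.2) :
    powerSumsDensity f (powerSums p) = (p.2 - p.1)⁻¹ * f p.2 * f p.1 := by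
  have hpos : 0 ≤ p.2 - p.1 := sub_nonneg.2 hp.le
  rw [powerSumsDensity, two_mul_snd_powerSums_sub_sq, Real.sqrt_sq hpos,
    Real.rpow_neg (sq_nonneg _), ← Real.sqrt_eq_rpow, Real.sqrt_sq hpos]
  simp only [powerSums]
  ring_nf

theorem abs_det_mul_powerSumsDensity_powerSums {f : ℝ → ℝ} (hf : ∀ z, 0 ≤ f z) {p : ℝ × ℝ}
    (hp : p.1 < p.2) :
    ENNReal.ofReal |(powerSumsDeriv p).det| * ENNReal.ofReal (powerSumsDensity f (powerSums p)) =
      2 * (ENNReal.ofReal (f p.1) * ENNReal.ofReal (f p.2)) := by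
  have hpos : 0 < p.2 - p.1 := sub_pos.2 hp
  rw [det_powerSumsDeriv, powerSumsDensity_powerSums f hp, abs_of_pos (by positivity),
    ← ENNReal.ofReal_mul (by positivity), ← ENNReal.ofReal_mul (hf _),
    ← ENNReal.ofReal_ofNat 2, ← ENNReal.ofReal_mul zero_le_two]
  congr 1
  field_simp

theorem two_smul_map_powerSums_withDensity {f : ℝ → ℝ} (hf : Measurable f)
    (hf0 : ∀ z, 0 ≤ f z) :
    (2 : ℝ≥0∞) • ((volume.restrict {p : ℝ × ℝ | p.1 < p.2}).withDensity
        fun p => ENNReal.ofReal (f p.1) * ENNReal.ofReal (f p.2)).map powerSums =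
      volume.withDensity ({q | q.1 ^ 2 < 2 * q.2}.indicator
        fun q => ENNReal.ofReal (powerSumsDensity f q)) := by
  have hlt : MeasurableSet {p : ℝ × ℝ | p.1 < p.2} := measurableSet_lt'
  have hdet : Measurable fun p => ENNReal.ofReal |(powerSumsDeriv p).det| := by
    simp only [det_powerSumsDeriv]
    fun_prop
  have hdens : Measurable fun q => ENNReal.ofReal (powerSumsDensity f q) :=
    (measurable_powerSumsDensity hf).ennreal_ofReal
  have hjac : ((volume.restrict {p : ℝ × ℝ | p.1 < p.2}).withDensity
        fun p => ENNReal.ofReal |(powerSumsDeriv p).det|).map powerSums =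
      volume.restrict {q | q.1 ^ 2 < 2 * q.2} := by
    rw [map_withDensity_abs_det_fderiv_eq_addHaar _ hlt.nullMeasurableSet
      (fun p _ => (hasFDerivAt_powerSums p).hasFDerivWithinAt) injOn_powerSums,
      powerSums_image_lt]
  rw [← Measure.map_smul, ← withDensity_smul _ (by fun_prop),
    withDensity_congr_ae (g := (fun p => ENNReal.ofReal |(powerSumsDeriv p).det|) *
      ((fun q => ENNReal.ofReal (powerSumsDensity f q)) ∘ powerSums)),
    withDensity_mul _ hdet (hdens.comp measurable_powerSums),
    Measure.map_withDensity_comp _ measurable_powerSums hdens, hjac,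
    withDensity_indicator (measurableSet_lt (by fun_prop) (by fun_prop))]
  filter_upwards [ae_restrict_mem hlt] with p hp
  exact (abs_det_mul_powerSumsDensity_powerSums hf0 hp).symm

theorem density_of_conv_of_pushforward_general (ρ : Measure ℝ)
    (f : ℝ → ℝ) (hf_meas : Measurable f) (hf_nonneg : ∀ z, 0 ≤ f z)
    (hρ : ρ = MeasureTheory.volume.withDensity (fun z => ENNReal.ofReal (f z))) :
    Measure.conv (ρ.map (fun z => ((z, z ^ 2) : ℝ × ℝ))) (ρ.map (fun z => ((z, z ^ 2) : ℝ × ℝ))) =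
      MeasureTheory.volume.withDensity (fun p : ℝ × ℝ =>
        if p.1 ^ 2 < 2 * p.2 then
          ENNReal.ofReal ((2 * p.2 - p.1 ^ 2) ^ (-(1 / 2 : ℝ)) *
            f ((p.1 + Real.sqrt (2 * p.2 - p.1 ^ 2)) / 2) *
            f ((p.1 - Real.sqrt (2 * p.2 - p.1 ^ 2)) / 2))
        else 0) := by
  subst hρ
  have hdens : Measurable fun z => ENNReal.ofReal (f z) := hf_meas.ennreal_ofReal
  have hlaw : (fun p : ℝ × ℝ => ((p.1, p.1 ^ 2) : ℝ × ℝ) + (p.2, p.2 ^ 2)) = powerSums := rfl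
  rw [Measure.conv_map_map (by fun_prop) (by fun_prop), hlaw,
    Measure.map_prod_self_eq_two_smul_map_restrict_lt _ measurable_powerSums powerSums_comp_swap,
    prod_withDensity hdens hdens, ← Measure.volume_eq_prod,
    restrict_withDensity measurableSet_lt', two_smul_map_powerSums_withDensity hf_meas hf_nonneg]
  rfl

theorem density_of_conv_of_pushforward (ρ : Measure ℝ) [IsProbabilityMeasure ρ]
    (f : ℝ → ℝ) (hf_meas : Measurable f) (hf_nonneg : ∀ z, 0 ≤ f z)
    (hρ : ρ = MeasureTheory.volume.withDensity (fun z => ENNReal.ofReal (f z))) :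
    Measure.conv (ρ.map (fun z => ((z, z ^ 2) : ℝ × ℝ))) (ρ.map (fun z => ((z, z ^ 2) : ℝ × ℝ))) =
      MeasureTheory.volume.withDensity (fun p : ℝ × ℝ =>
        if p.1 ^ 2 < 2 * p.2 then
          ENNReal.ofReal ((2 * p.2 - p.1 ^ 2) ^ (-(1 / 2 : ℝ)) *
            f ((p.1 + Real.sqrt (2 * p.2 - p.1 ^ 2)) / 2) *
            f ((p.1 - Real.sqrt (2 * p.2 - p.1 ^ 2)) / 2))
        else 0) :=
  density_of_conv_of_pushforward_general ρ f hf_meas hf_nonneg hρ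
end

section
/- Let f : ℝ → [0,∞) be a probability density and p ∈ (1,2]. With f₂ defined as f₂(u,v) = (2v − u²)^{−1/2} f((u + √(2v−u²))/2) f((u − √(2v−u²))/2) 1_{u² < 2v}, one has ∫_{ℝ²} f₂(u,v)^p du dv = ∫_{ℝ²} f(x)^p f(y)^p |y − x|^{1−p} dx dy. -/
/-!
The map `(x, y) ↦ (x + y, x² + y²)` is injective on `{x < y}`, maps it onto `{u² < 2v}` and has
Jacobian `2 (y - x)`. Since `2v - u² = (x - y)²` there, `f₂` pulls back to `f x * f y / |x - y|`,
so changing variables turns the left side into `∫_{x < y} 2 |x - y| (f x f y / |x - y|)^p`, which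
is twice the integral of the symmetric right-hand integrand over a half-plane; the diagonal is null.
-/

open MeasureTheory Set
open scoped ENNReal

theorem MeasureTheory.Measure.prod_diagonal_eq_zero_s16 {α : Type*} [MeasurableSpace α]
    [MeasurableEq α] (μ ν : Measure α) [SFinite ν] [NullSingletonClass ν] :
    μ.prod ν (diagonal α) = 0 := by
  rw [Measure.prod_apply measurableSet_diagonal]
  have : ∀ x : α, Prod.mk x ⁻¹' diagonal α = {x} := fun x => by ext; simp [eq_comm]
  simp [this]

theorem MeasureTheory.lintegral_prod_self_eq_two_mul_setLIntegral_lt {α : Type*}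
    [TopologicalSpace α] [LinearOrder α] [OrderClosedTopology α] [SecondCountableTopology α]
    [MeasurableSpace α] [OpensMeasurableSpace α] (μ : Measure α) [SFinite μ] [NullSingletonClass μ]
    (H : α × α → ℝ≥0∞) (hH : ∀ q, H q.swap = H q) :
    ∫⁻ q, H q ∂μ.prod μ = 2 * ∫⁻ q in {q | q.1 < q.2}, H q ∂μ.prod μ := by
  set s := {q : α × α | q.1 < q.2}
  have hdiag := Measure.prod_diagonal_eq_zero_s16 μ μ
  have hcompl : (sᶜ : Set (α × α)) =ᵐ[μ.prod μ] Prod.swap ⁻¹' s := by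
    refine ae_eq_set.2 ⟨measure_mono_null ?_ hdiag, measure_mono_null ?_ hdiag⟩
    · rintro ⟨x, y⟩ ⟨hxy, hyx⟩
      exact le_antisymm (not_lt.1 hyx) (not_lt.1 hxy)
    · rintro ⟨x, y⟩ ⟨hyx, hxy⟩
      exact absurd (not_not.1 hxy) (lt_asymm hyx)
  calc ∫⁻ q, H q ∂μ.prod μ
      = ∫⁻ q in s, H q ∂μ.prod μ + ∫⁻ q in Prod.swap ⁻¹' s, H q.swap ∂μ.prod μ := by
        simp_rw [hH]
        rw [← setLIntegral_congr hcompl, lintegral_add_compl H measurableSet_lt']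
    _ = 2 * ∫⁻ q in s, H q ∂μ.prod μ := by
        rw [Measure.measurePreserving_swap.setLIntegral_comp_preimage_emb
          MeasurableEquiv.prodComm.measurableEmbedding, two_mul]

/-- The paper's `f₂`: the joint density of `(X + Y, X² + Y²)` for independent `X, Y` with density
`f`. -/
noncomputable def sumSqDensity (f : ℝ → ℝ) (q : ℝ × ℝ) : ℝ :=
  if q.1 ^ 2 < 2 * q.2 then
    (2 * q.2 - q.1 ^ 2) ^ (-(1 / 2 : ℝ)) *
      f ((q.1 + Real.sqrt (2 * q.2 - q.1 ^ 2)) / 2) *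
      f ((q.1 - Real.sqrt (2 * q.2 - q.1 ^ 2)) / 2)
  else 0

def sumAndSumSq (q : ℝ × ℝ) : ℝ × ℝ := (q.1 + q.2, q.1 ^ 2 + q.2 ^ 2)

noncomputable def fderivSumAndSumSq (q : ℝ × ℝ) : (ℝ × ℝ) →L[ℝ] ℝ × ℝ :=
  LinearMap.toContinuousLinearMap
    (Matrix.toLin (Module.Basis.finTwoProd ℝ) (Module.Basis.finTwoProd ℝ)
      !![1, 1; 2 * q.1, 2 * q.2])

theorem hasFDerivAt_sumAndSumSq (q : ℝ × ℝ) :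
    HasFDerivAt sumAndSumSq (fderivSumAndSumSq q) q := by
  rw [fderivSumAndSumSq, Matrix.toLin_finTwoProd_toContinuousLinearMap]
  convert HasFDerivAt.prodMk (𝕜 := ℝ) (hasFDerivAt_fst.add hasFDerivAt_snd)
    (((hasDerivAt_pow 2 q.1).comp_hasFDerivAt q hasFDerivAt_fst).add
      ((hasDerivAt_pow 2 q.2).comp_hasFDerivAt q hasFDerivAt_snd)) using 2 <;>
  first | rfl | simp

theorem det_fderivSumAndSumSq (q : ℝ × ℝ) : (fderivSumAndSumSq q).det = 2 * (q.2 - q.1) := by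
  simp only [fderivSumAndSumSq, LinearMap.det_toContinuousLinearMap, LinearMap.det_toLin,
    Matrix.det_fin_two_of]
  ring

theorem injOn_sumAndSumSq : InjOn sumAndSumSq {q | q.1 < q.2} := by
  rintro ⟨x, y⟩ (hxy : x < y) ⟨x', y'⟩ (hxy' : x' < y') h
  simp only [sumAndSumSq, Prod.mk.injEq] at h
  obtain ⟨hsum, hsq⟩ := h
  have hdiff : (y - x) ^ 2 = (y' - x') ^ 2 := by
    linear_combination 2 * hsq - (x + y + x' + y') * hsum
  have := (pow_left_inj₀ (sub_pos.2 hxy).le (sub_pos.2 hxy').le two_ne_zero).1 hdiff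
  rw [Prod.mk.injEq]
  constructor <;> linarith

theorem image_sumAndSumSq : sumAndSumSq '' {q | q.1 < q.2} = {q | q.1 ^ 2 < 2 * q.2} := by
  ext ⟨u, v⟩
  constructor
  · rintro ⟨⟨x, y⟩, hxy : x < y, h⟩
    rw [← h]
    show (x + y) ^ 2 < 2 * (x ^ 2 + y ^ 2)
    nlinarith [sq_pos_of_pos (sub_pos.2 hxy)]
  · intro (huv : u ^ 2 < 2 * v)
    have hpos : 0 < 2 * v - u ^ 2 := by linarith
    have hsq := Real.sq_sqrt hpos.le
    refine ⟨((u - √(2 * v - u ^ 2)) / 2, (u + √(2 * v - u ^ 2)) / 2), ?_, ?_⟩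
    · show (u - √(2 * v - u ^ 2)) / 2 < (u + √(2 * v - u ^ 2)) / 2
      linarith [Real.sqrt_pos.2 hpos]
    · simp only [sumAndSumSq, Prod.mk.injEq]
      constructor
      · ring
      · linear_combination hsq / 2

theorem sumSqDensity_sumAndSumSq (f : ℝ → ℝ) {q : ℝ × ℝ} (hq : q.1 ≠ q.2) :
    sumSqDensity f (sumAndSumSq q) = f q.1 * f q.2 / |q.1 - q.2| := by
  obtain ⟨x, y⟩ := q
  have hdisc : 2 * (x ^ 2 + y ^ 2) - (x + y) ^ 2 = (x - y) ^ 2 := by ring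
  have hlt : (x + y) ^ 2 < 2 * (x ^ 2 + y ^ 2) := by
    nlinarith [sq_pos_of_ne_zero (sub_ne_zero.2 hq)]
  simp only [sumSqDensity, sumAndSumSq, if_pos hlt, hdisc, Real.sqrt_sq_eq_abs]
  rw [Real.rpow_neg (sq_nonneg _), ← Real.sqrt_eq_rpow, Real.sqrt_sq_eq_abs, div_eq_inv_mul,
    mul_assoc]
  rcases lt_or_gt_of_ne hq with h | h
  · rw [abs_of_neg (sub_neg.2 h), mul_comm (f _)]
    ring_nf
  · rw [abs_of_pos (sub_pos.2 h)]
    ring_nf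

theorem mul_mul_div_rpow {a b d : ℝ} (ha : 0 ≤ a) (hb : 0 ≤ b) (hd : 0 < d) (p : ℝ) :
    d * (a * b / d) ^ p = a ^ p * b ^ p * d ^ (1 - p) := by
  rw [Real.div_rpow (mul_nonneg ha hb) hd.le, Real.mul_rpow ha hb, Real.rpow_sub hd,
    Real.rpow_one]
  field_simp

theorem lintegral_f2_rpow_eq_general (f : ℝ → ℝ)
    (hf_nonneg : ∀ z, 0 ≤ f z)
    (p : ℝ) (hp1 : 1 < p) :
    (∫⁻ q : ℝ × ℝ, ENNReal.ofReal
        ((if q.1 ^ 2 < 2 * q.2 then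
            (2 * q.2 - q.1 ^ 2) ^ (-(1 / 2 : ℝ)) *
              f ((q.1 + Real.sqrt (2 * q.2 - q.1 ^ 2)) / 2) *
              f ((q.1 - Real.sqrt (2 * q.2 - q.1 ^ 2)) / 2)
          else 0) ^ p)) =
      ∫⁻ q : ℝ × ℝ, ENNReal.ofReal (f q.1 ^ p * f q.2 ^ p * |q.2 - q.1| ^ (1 - p)) := by
  set H : ℝ × ℝ → ℝ≥0∞ := fun q =>
    ENNReal.ofReal (f q.1 ^ p * f q.2 ^ p * |q.2 - q.1| ^ (1 - p))
  have hsupp : (fun q => ENNReal.ofReal (sumSqDensity f q ^ p)).support ⊆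
      sumAndSumSq '' {q | q.1 < q.2} := by
    rw [image_sumAndSumSq]
    intro q hq
    by_contra (h : ¬ q.1 ^ 2 < 2 * q.2)
    simp [sumSqDensity, h, Real.zero_rpow (by linarith : p ≠ 0)] at hq
  have hjac : ∀ q ∈ {q : ℝ × ℝ | q.1 < q.2},
      ENNReal.ofReal |(fderivSumAndSumSq q).det| *
        ENNReal.ofReal (sumSqDensity f (sumAndSumSq q) ^ p) = 2 * H q := by
    rintro q (hq : q.1 < q.2)
    have hd : 0 < q.2 - q.1 := sub_pos.2 hq
    dsimp only [H]
    rw [det_fderivSumAndSumSq, sumSqDensity_sumAndSumSq f hq.ne, abs_sub_comm q.1,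
      abs_of_pos hd, abs_of_pos (by positivity), ← ENNReal.ofReal_mul (by positivity), mul_assoc,
      mul_mul_div_rpow (hf_nonneg _) (hf_nonneg _) hd, ENNReal.ofReal_mul zero_le_two,
      ENNReal.ofReal_ofNat]
  have hswap : ∀ q, H q.swap = H q := fun q => by
    simp only [H, Prod.fst_swap, Prod.snd_swap, abs_sub_comm q.1, mul_comm (f q.2 ^ p)]
  calc ∫⁻ q, ENNReal.ofReal (sumSqDensity f q ^ p)
      = ∫⁻ q in sumAndSumSq '' {q | q.1 < q.2}, ENNReal.ofReal (sumSqDensity f q ^ p) :=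
        (setLIntegral_eq_of_support_subset hsupp).symm
    _ = ∫⁻ q in {q | q.1 < q.2}, 2 * H q := by
        rw [lintegral_image_eq_lintegral_abs_det_fderiv_mul volume measurableSet_lt'
          (fun q _ => (hasFDerivAt_sumAndSumSq q).hasFDerivWithinAt) injOn_sumAndSumSq]
        exact setLIntegral_congr_fun measurableSet_lt' hjac
    _ = ∫⁻ q, H q := by
        rw [lintegral_const_mul' _ _ ENNReal.ofNat_ne_top, Measure.volume_eq_prod,
          lintegral_prod_self_eq_two_mul_setLIntegral_lt volume H hswap]

theorem lintegral_f2_rpow_eq (f : ℝ → ℝ) (hf_meas : Measurable f)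
    (hf_nonneg : ∀ z, 0 ≤ f z)
    (hf_prob : ∫⁻ z, ENNReal.ofReal (f z) = 1)
    (p : ℝ) (hp1 : 1 < p) (hp2 : p ≤ 2) :
    (∫⁻ q : ℝ × ℝ, ENNReal.ofReal
        ((if q.1 ^ 2 < 2 * q.2 then
            (2 * q.2 - q.1 ^ 2) ^ (-(1 / 2 : ℝ)) *
              f ((q.1 + Real.sqrt (2 * q.2 - q.1 ^ 2)) / 2) *
              f ((q.1 - Real.sqrt (2 * q.2 - q.1 ^ 2)) / 2)
          else 0) ^ p)) =
      ∫⁻ q : ℝ × ℝ, ENNReal.ofReal (f q.1 ^ p * f q.2 ^ p * |q.2 - q.1| ^ (1 - p)) :=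
  lintegral_f2_rpow_eq_general f hf_nonneg p hp1
end
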